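/- arXiv:2507.00423 — 3 statements merged into one kernel-verified Lean document; each statement's English description precedes it below -/
import Mathlib

section
/- The squared deviation of the trimmed mean from any reference value ω is bounded by the larger of the squared deviations of the two sandwiching benign averages: letting A = (1/(n−2b)) Σ_{i=b+1}^{n−b} θ_i, L = (1/(n−2b)) Σ_{i=1}^{n−2b} θ̂_{b−m+i} and U = (1/(n−2b)) Σ_{i=1}^{n−2b} θ̂_{b+i}, one has (A − ω)² ≤ max{(L − ω)², (U − ω)²} for every real number ω. -/
/-- Order statistics lower bound: the `j`-th smallest benign value is at least `θ j`. -/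
lemma theta_le_thetahat (n m : ℕ) (θ θhat : ℕ → ℝ)
    (hθ : ∀ i j, 1 ≤ i → i ≤ j → j ≤ n → θ i ≤ θ j)
    (hθhat : ∀ i j, 1 ≤ i → i ≤ j → j ≤ n - m → θhat i ≤ θhat j)
    (φ : ℕ → ℕ)
    (hφmaps : ∀ j, 1 ≤ j → j ≤ n - m → 1 ≤ φ j ∧ φ j ≤ n)
    (hφinj : Set.InjOn φ (Set.Icc 1 (n - m)))
    (hφval : ∀ j, 1 ≤ j → j ≤ n - m → θhat j = θ (φ j))
    (j : ℕ) (hj1 : 1 ≤ j) (hj2 : j ≤ n - m) : θ j ≤ θhat j := by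
  have hcard : ((Finset.Icc 1 j).image φ).card = j := by
    rw [Finset.card_image_of_injOn, Nat.card_Icc]
    · omega
    · intro x hx y hy hxy
      simp only [Finset.coe_Icc, Set.mem_Icc] at hx hy
      exact hφinj ⟨hx.1, le_trans hx.2 hj2⟩ ⟨hy.1, le_trans hy.2 hj2⟩ hxy
  have hex : ∃ i ∈ Finset.Icc 1 j, j ≤ φ i := by
    by_contra hc
    push_neg at hc
    have hsub : (Finset.Icc 1 j).image φ ⊆ Finset.Icc 1 (j - 1) := by
      intro x hx
      simp only [Finset.mem_image, Finset.mem_Icc] at hx ⊢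
      obtain ⟨i, hi, rfl⟩ := hx
      have h1 := hφmaps i hi.1 (le_trans hi.2 hj2)
      have h2 := hc i (Finset.mem_Icc.mpr hi)
      omega
    have := Finset.card_le_card hsub
    rw [hcard, Nat.card_Icc] at this
    omega
  obtain ⟨i, hi, hji⟩ := hex
  rw [Finset.mem_Icc] at hi
  have him : i ≤ n - m := le_trans hi.2 hj2
  calc θ j ≤ θ (φ i) := hθ j (φ i) hj1 hji (hφmaps i hi.1 him).2
    _ = θhat i := (hφval i hi.1 him).symm
    _ ≤ θhat j := hθhat i j hi.1 hi.2 hj2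

/-- Order statistics upper bound: the `j`-th smallest benign value is at most `θ (j + m)`. -/
lemma thetahat_le_theta (n m : ℕ) (θ θhat : ℕ → ℝ)
    (hθ : ∀ i j, 1 ≤ i → i ≤ j → j ≤ n → θ i ≤ θ j)
    (hθhat : ∀ i j, 1 ≤ i → i ≤ j → j ≤ n - m → θhat i ≤ θhat j)
    (φ : ℕ → ℕ)
    (hφmaps : ∀ j, 1 ≤ j → j ≤ n - m → 1 ≤ φ j ∧ φ j ≤ n)
    (hφinj : Set.InjOn φ (Set.Icc 1 (n - m)))
    (hφval : ∀ j, 1 ≤ j → j ≤ n - m → θhat j = θ (φ j))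
    (j : ℕ) (hj1 : 1 ≤ j) (hj2 : j ≤ n - m) (hjm : j + m ≤ n) : θhat j ≤ θ (j + m) := by
  have hcard : ((Finset.Icc j (n - m)).image φ).card = n - m + 1 - j := by
    rw [Finset.card_image_of_injOn, Nat.card_Icc]
    intro x hx y hy hxy
    simp only [Finset.coe_Icc, Set.mem_Icc] at hx hy
    exact hφinj ⟨le_trans hj1 hx.1, hx.2⟩ ⟨le_trans hj1 hy.1, hy.2⟩ hxy
  have hex : ∃ i ∈ Finset.Icc j (n - m), φ i ≤ j + m := by
    by_contra hc
    push_neg at hc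
    have hsub : (Finset.Icc j (n - m)).image φ ⊆ Finset.Icc (j + m + 1) n := by
      intro x hx
      simp only [Finset.mem_image, Finset.mem_Icc] at hx ⊢
      obtain ⟨i, hi, rfl⟩ := hx
      have h1 := hφmaps i (le_trans hj1 hi.1) hi.2
      have h2 := hc i (Finset.mem_Icc.mpr hi)
      omega
    have := Finset.card_le_card hsub
    rw [hcard, Nat.card_Icc] at this
    omega
  obtain ⟨i, hi, hji⟩ := hex
  rw [Finset.mem_Icc] at hi
  have hi1 : 1 ≤ i := le_trans hj1 hi.1
  calc θhat j ≤ θhat i := hθhat j i hj1 hi.1 hi.2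
    _ = θ (φ i) := hφval i hi1 hi.2
    _ ≤ θ (j + m) := hθ (φ i) (j + m) (hφmaps i hi1 hi.2).1 hji hjm

/-- The squared deviation of the trimmed mean from any reference value `ω` is bounded by the
larger of the squared deviations of the two sandwiching benign averages. -/
theorem trimmed_mean_sq_dev_le_max
    (n m b : ℕ) (hmb : m < b) (hb : b ≤ n / 2 - 1)
    (θ θhat : ℕ → ℝ)
    (hθ : ∀ i j, 1 ≤ i → i ≤ j → j ≤ n → θ i ≤ θ j)
    (hθhat : ∀ i j, 1 ≤ i → i ≤ j → j ≤ n - m → θhat i ≤ θhat j)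
    (φ : ℕ → ℕ)
    (hφmaps : ∀ j, 1 ≤ j → j ≤ n - m → 1 ≤ φ j ∧ φ j ≤ n)
    (hφinj : Set.InjOn φ (Set.Icc 1 (n - m)))
    (hφval : ∀ j, 1 ≤ j → j ≤ n - m → θhat j = θ (φ j))
    (ω : ℝ)
    (A L U : ℝ)
    (hA : A = (1 / ((n - 2 * b : ℕ) : ℝ)) * ∑ i ∈ Finset.Icc (b + 1) (n - b), θ i)
    (hL : L = (1 / ((n - 2 * b : ℕ) : ℝ)) * ∑ i ∈ Finset.Icc 1 (n - 2 * b), θhat (b - m + i))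
    (hU : U = (1 / ((n - 2 * b : ℕ) : ℝ)) * ∑ i ∈ Finset.Icc 1 (n - 2 * b), θhat (b + i)) :
    (A - ω) ^ 2 ≤ max ((L - ω) ^ 2) ((U - ω) ^ 2) := by
  have hb1 : 1 ≤ b := by omega
  have hn : 2 * b + 2 ≤ n := by omega
  have hc : (0:ℝ) ≤ 1 / ((n - 2 * b : ℕ) : ℝ) := by positivity
  have hsum : ∑ i ∈ Finset.Icc (b + 1) (n - b), θ i
      = ∑ i ∈ Finset.Icc 1 (n - 2 * b), θ (b + i) := by
    apply Finset.sum_nbij' (fun i => i - b) (fun i => b + i) <;>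
      simp only [Finset.mem_Icc] <;> intros <;> first | omega | (congr 1; omega)
  have hLA : L ≤ A := by
    rw [hL, hA, hsum]
    apply mul_le_mul_of_nonneg_left _ hc
    apply Finset.sum_le_sum
    intro i hi
    rw [Finset.mem_Icc] at hi
    have key := thetahat_le_theta n m θ θhat hθ hθhat φ hφmaps hφinj hφval
      (b - m + i) (by omega) (by omega) (by omega)
    have heq : b - m + i + m = b + i := by omega
    rwa [heq] at key
  have hAU : A ≤ U := by
    rw [hU, hA, hsum]
    apply mul_le_mul_of_nonneg_left _ hc
    apply Finset.sum_le_sum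
    intro i hi
    rw [Finset.mem_Icc] at hi
    exact theta_le_thetahat n m θ θhat hθ hθhat φ hφmaps hφinj hφval
      (b + i) (by omega) (by omega)
  rcases le_total A ω with h | h
  · have : (A - ω) ^ 2 ≤ (L - ω) ^ 2 := by nlinarith
    exact le_trans this (le_max_left _ _)
  · have : (A - ω) ^ 2 ≤ (U - ω) ^ 2 := by nlinarith
    exact le_trans this (le_max_right _ _)
end

section
/- Uniform-subset expectation bound implicit in the proof of Theorem 1: the expectation of the maximum, over all subsets T of {1,…,N} of cardinality N − b, of the squared scaled centered partial sum satisfies E[max_{T ⊆ {1,…,N}, |T| = N−b} ((1/(N−b)) Σ_{i∈T} (X_i − ω))²] ≤ 2N(b+1)σ²/(N−b)². -/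
open MeasureTheory ProbabilityTheory

/-- Uniform-subset expectation bound implicit in the proof of Theorem 1: the expectation of the
maximum, over all subsets `T` of the indices of cardinality `N - b`, of the squared scaled
centered partial sum is at most `2 N (b+1) σ² / (N-b)²`. -/
theorem uniform_subset_expectation_bound
    {Ω : Type*} [MeasurableSpace Ω] (P : Measure Ω) [IsProbabilityMeasure P]
    (N b : ℕ) (hb : 0 < b) (hbN : b < N)
    (X : Fin N → Ω → ℝ) (ω σ : ℝ)
    (hindep : iIndepFun X P)
    (hident : ∀ i j, IdentDistrib (X i) (X j) P P)
    (hL2 : ∀ i, MemLp (X i) 2 P)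
    (hmean : ∀ i, ∫ a, X i a ∂P = ω)
    (hvar : ∀ i, variance (X i) P = σ ^ 2) :
    ∫ a,
        (Finset.powersetCard (N - b) (Finset.univ : Finset (Fin N))).sup'
          (Finset.powersetCard_nonempty.2 (by simp))
          (fun T => ((1 / ((N - b : ℕ) : ℝ)) * ∑ i ∈ T, (X i a - ω)) ^ 2) ∂P
      ≤ 2 * (N : ℝ) * ((b : ℝ) + 1) * σ ^ 2 / ((N - b : ℕ) : ℝ) ^ 2 := by
  have hσ : 0 ≤ σ ^ 2 := (hvar ⟨0, by omega⟩) ▸ variance_nonneg _ _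
  set n : ℕ := N - b with hn
  set c : ℝ := 1 / (n : ℝ) with hc
  set Y : Fin N → Ω → ℝ := fun i a => X i a - ω with hYdef
  have hY2 : ∀ i, MemLp (Y i) 2 P := fun i => (hL2 i).sub (memLp_const ω)
  have hYsum : MemLp (fun a => ∑ i, Y i a) 2 P :=
    memLp_finset_sum (μ := P) (Finset.univ : Finset (Fin N)) (fun i _ => hY2 i)
  have hIsq : ∀ i, Integrable (fun a => Y i a ^ 2) P := fun i => (hY2 i).integrable_sq
  have hIS : Integrable (fun a => (∑ i, Y i a) ^ 2) P := hYsum.integrable_sq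
  set G : Ω → ℝ := fun a => c ^ 2 * (2 * (∑ i, Y i a) ^ 2 + 2 * b * ∑ i, Y i a ^ 2)
    with hGdef
  have hGint : Integrable G P := by
    exact ((hIS.const_mul 2).add ((integrable_finset_sum _ (fun i _ => hIsq i)).const_mul
      (2 * b))).const_mul (c ^ 2)
  -- pointwise bound
  have hpt : ∀ a,
      (Finset.powersetCard n (Finset.univ : Finset (Fin N))).sup'
        (Finset.powersetCard_nonempty.2 (by simp only [Finset.card_univ, Fintype.card_fin]; omega))
        (fun T => (c * ∑ i ∈ T, Y i a) ^ 2) ≤ G a := by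
    intro a
    apply Finset.sup'_le
    intro T hT
    rw [Finset.mem_powersetCard] at hT
    have hTc : (Tᶜ : Finset (Fin N)).card = b := by
      have := Finset.card_compl T
      rw [hT.2] at this
      simp only [Fintype.card_fin] at this
      omega
    have hsplit : ∑ i ∈ T, Y i a = (∑ i, Y i a) - ∑ i ∈ Tᶜ, Y i a := by
      have := Finset.sum_add_sum_compl T (fun i => Y i a)
      linarith
    have h1 : (∑ i ∈ T, Y i a) ^ 2
        ≤ 2 * (∑ i, Y i a) ^ 2 + 2 * (∑ i ∈ Tᶜ, Y i a) ^ 2 := by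
      rw [hsplit]; nlinarith [sq_nonneg ((∑ i, Y i a) + ∑ i ∈ Tᶜ, Y i a)]
    have h2 : (∑ i ∈ Tᶜ, Y i a) ^ 2 ≤ (b : ℝ) * ∑ i ∈ Tᶜ, Y i a ^ 2 := by
      have := sq_sum_le_card_mul_sum_sq (s := Tᶜ) (f := fun i => Y i a)
      rwa [hTc] at this
    have h3 : ∑ i ∈ Tᶜ, Y i a ^ 2 ≤ ∑ i, Y i a ^ 2 :=
      Finset.sum_le_sum_of_subset_of_nonneg (Finset.subset_univ _)
        (fun i _ _ => sq_nonneg _)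
    have hb0 : (0:ℝ) ≤ (b:ℝ) := Nat.cast_nonneg _
    have : (∑ i ∈ T, Y i a) ^ 2
        ≤ 2 * (∑ i, Y i a) ^ 2 + 2 * b * ∑ i, Y i a ^ 2 := by nlinarith
    have hcsq : (c * ∑ i ∈ T, Y i a) ^ 2 = c ^ 2 * (∑ i ∈ T, Y i a) ^ 2 := by ring
    rw [hGdef, hcsq]
    exact mul_le_mul_of_nonneg_left this (sq_nonneg c)
  have hmono : ∫ a,
      (Finset.powersetCard n (Finset.univ : Finset (Fin N))).sup'
        (Finset.powersetCard_nonempty.2 (by simp only [Finset.card_univ, Fintype.card_fin]; omega))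
        (fun T => (c * ∑ i ∈ T, Y i a) ^ 2) ∂P ≤ ∫ a, G a ∂P := by
    apply integral_mono_of_nonneg
    · filter_upwards with a
      obtain ⟨T, hT⟩ := (Finset.powersetCard_nonempty.2
        (by simp only [Finset.card_univ, Fintype.card_fin]; omega :
          n ≤ (Finset.univ : Finset (Fin N)).card))
      exact le_trans (sq_nonneg (c * ∑ i ∈ T, Y i a))
        (Finset.le_sup' (fun T => (c * ∑ i ∈ T, Y i a) ^ 2) hT)
    · exact hGint
    · exact ae_of_all _ hpt
  -- compute ∫ G
  have hmeanY : ∀ i, ∫ a, Y i a ∂P = 0 := by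
    intro i
    have : Integrable (X i) P := (hL2 i).integrable one_le_two
    simp [hYdef, integral_sub this (integrable_const ω), hmean i]
  have hvarY : ∀ i, ∫ a, Y i a ^ 2 ∂P = σ ^ 2 := by
    intro i
    have h := variance_eq_integral (hL2 i).aestronglyMeasurable.aemeasurable
    rw [hvar i] at h
    rw [h, hmean i]
  have hXsum : MemLp (∑ i, X i) 2 P := memLp_finset_sum' _ (fun i _ => hL2 i)
  have hmeanXsum : ∫ a, (∑ i, X i) a ∂P = N * ω := by
    simp only [Finset.sum_apply]
    rw [integral_finset_sum _ (fun i _ => (hL2 i).integrable one_le_two)]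
    simp [hmean]
  have hvarsum : ∫ a, (∑ i, Y i a) ^ 2 ∂P = N * σ ^ 2 := by
    have hv : variance (∑ i, X i) P = ∑ i : Fin N, variance (X i) P := by
      apply IndepFun.variance_sum (fun i _ => hL2 i)
      intro i _ j _ hij
      exact hindep.indepFun hij
    rw [Finset.sum_congr rfl (fun i _ => hvar i)] at hv
    simp only [Finset.sum_const, Finset.card_univ, Fintype.card_fin, nsmul_eq_mul] at hv
    have h2 := variance_eq_integral hXsum.aestronglyMeasurable.aemeasurable
    rw [hv, hmeanXsum] at h2
    rw [h2]
    congr 1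
    funext a
    simp only [Pi.pow_apply, Pi.sub_apply, Finset.sum_apply, hYdef, Finset.sum_sub_distrib,
      Finset.sum_const, Finset.card_univ, Fintype.card_fin, nsmul_eq_mul]
  have hGval : ∫ a, G a ∂P
      = c ^ 2 * (2 * (N * σ ^ 2) + 2 * b * (N * σ ^ 2)) := by
    rw [hGdef]
    simp only
    rw [integral_const_mul]
    congr 1
    rw [integral_add (hIS.const_mul 2)
      ((integrable_finset_sum _ (fun i _ => hIsq i)).const_mul (2 * b)),
      integral_const_mul, integral_const_mul, hvarsum,
      integral_finset_sum _ (fun i _ => hIsq i)]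
    rw [Finset.sum_congr rfl (fun i _ => hvarY i)]
    simp [mul_comm]
  have hnpos : 0 < n := Nat.sub_pos_of_lt hbN
  have hnR : (0:ℝ) < (n:ℝ) := by exact_mod_cast hnpos
  have hfinal : c ^ 2 * (2 * (N * σ ^ 2) + 2 * b * (N * σ ^ 2))
      ≤ 2 * (N : ℝ) * ((b : ℝ) + 1) * σ ^ 2 / (n : ℝ) ^ 2 := by
    rw [hc]
    rw [div_pow, one_pow, div_mul_eq_mul_div, one_mul, div_le_div_iff₀ (by positivity)
      (by positivity)]
    ring_nf
    nlinarith [sq_nonneg ((n:ℝ))]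
  calc _ ≤ ∫ a, G a ∂P := hmono
    _ = _ := hGval
    _ ≤ _ := hfinal
end

section
/- Theorem 1 (convergence guarantee for Angular Trimmed-mean aggregation): the expected squared deviation of the ATM output from the benign mean satisfies E[((1/(n−2b)) Σ_{i=b+1}^{n−b} θ_{(i)} − ω)²] ≤ 2(n−m)(b+1)σ²/(n−b−m)², where θ_{(1)} ≤ θ_{(2)} ≤ … ≤ θ_{(n)} is the nondecreasing rearrangement of the n values and the left-hand side is the average of the n−2b middle order statistics obtained after discarding the b smallest and b largest values. -/
open MeasureTheory ProbabilityTheory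

namespace ATM

lemma getD_mono {l : List ℝ} (h : l.Pairwise (· ≤ ·)) {i j : ℕ} (hij : i ≤ j)
    (hj : j < l.length) : l.getD i 0 ≤ l.getD j 0 := by
  have hi : i < l.length := lt_of_le_of_lt hij hj
  rw [List.getD_eq_getElem l 0 hi, List.getD_eq_getElem l 0 hj]
  exact h.rel_get_of_le (a := ⟨i, hi⟩) (b := ⟨j, hj⟩) hij

lemma sorted_le_getD {l : List ℝ} (h : l.Pairwise (· ≤ ·)) {t : ℝ} {k : ℕ}
    (hk1 : 1 ≤ k) (hk : k ≤ l.countP (fun x => decide (t ≤ x))) :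
    t ≤ l.getD (l.length - k) 0 := by
  have hkl : k ≤ l.length := hk.trans (l.countP_le_length)
  set i0 := l.length - k with hi0
  have hi0l : i0 < l.length := by omega
  by_contra hcon
  push_neg at hcon
  rw [List.getD_eq_getElem l 0 hi0l] at hcon
  have htake : ∀ x ∈ l.take (i0 + 1), ¬ (t ≤ x) := by
    intro x hx
    obtain ⟨j, hj, rfl⟩ := List.getElem_of_mem hx
    rw [List.getElem_take]
    have hjlen : j < l.length := by
      have := hj; rw [List.length_take] at this; omega
    have hji0 : j ≤ i0 := by
      have := hj; rw [List.length_take] at this; omega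
    have := getD_mono h hji0 hi0l
    rw [List.getD_eq_getElem l 0 hjlen, List.getD_eq_getElem l 0 hi0l] at this
    push_neg
    exact lt_of_le_of_lt this hcon
  have hsplit : l.countP (fun x => decide (t ≤ x)) =
      (l.take (i0+1)).countP (fun x => decide (t ≤ x))
        + (l.drop (i0+1)).countP (fun x => decide (t ≤ x)) := by
    conv_lhs => rw [← List.take_append_drop (i0+1) l]
    rw [List.countP_append]
  have h1 : (l.take (i0+1)).countP (fun x => decide (t ≤ x)) = 0 := by
    rw [List.countP_eq_zero]
    intro x hx
    simpa using htake x hx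
  have h2 : (l.drop (i0+1)).countP (fun x => decide (t ≤ x)) ≤ l.length - (i0+1) := by
    calc (l.drop (i0+1)).countP (fun x => decide (t ≤ x)) ≤ (l.drop (i0+1)).length :=
        List.countP_le_length
    _ = l.length - (i0+1) := List.length_drop
  omega

lemma sorted_getD_le {l : List ℝ} (h : l.Pairwise (· ≤ ·)) {t : ℝ} {k : ℕ}
    (hk1 : 1 ≤ k) (hk : k ≤ l.countP (fun x => decide (x ≤ t))) :
    l.getD (k - 1) 0 ≤ t := by
  have hkl : k ≤ l.length := hk.trans (l.countP_le_length)
  have hk1l : k - 1 < l.length := by omega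
  by_contra hcon
  push_neg at hcon
  rw [List.getD_eq_getElem l 0 hk1l] at hcon
  have hdrop : ∀ x ∈ l.drop (k-1), ¬ (x ≤ t) := by
    intro x hx
    obtain ⟨j, hj, rfl⟩ := List.getElem_of_mem hx
    rw [List.getElem_drop]
    have hjlen : k - 1 + j < l.length := by
      have := hj; rw [List.length_drop] at this; omega
    have := getD_mono h (Nat.le_add_right (k-1) j) hjlen
    rw [List.getD_eq_getElem l 0 hk1l, List.getD_eq_getElem l 0 hjlen] at this
    push_neg
    exact lt_of_lt_of_le hcon this
  have hsplit : l.countP (fun x => decide (x ≤ t)) =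
      (l.take (k-1)).countP (fun x => decide (x ≤ t))
        + (l.drop (k-1)).countP (fun x => decide (x ≤ t)) := by
    conv_lhs => rw [← List.take_append_drop (k-1) l]
    rw [List.countP_append]
  have h1 : (l.drop (k-1)).countP (fun x => decide (x ≤ t)) = 0 := by
    rw [List.countP_eq_zero]
    intro x hx
    simpa using hdrop x hx
  have h2 : (l.take (k-1)).countP (fun x => decide (x ≤ t)) ≤ k - 1 := by
    calc (l.take (k-1)).countP (fun x => decide (x ≤ t)) ≤ (l.take (k-1)).length :=
        List.countP_le_length
    _ ≤ k - 1 := by rw [List.length_take]; omega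
  omega

lemma sum_range_getD_map (l : List ℝ) (g : ℝ → ℝ) :
    ∑ i ∈ Finset.range l.length, g (l.getD i 0) = (l.map g).sum := by
  induction l with
  | nil => simp
  | cons x l ih =>
    rw [List.length_cons, Finset.sum_range_succ', List.map_cons, List.sum_cons, add_comm]
    simp only [List.getD_cons_succ, List.getD_cons_zero]
    rw [ih]

lemma avg_prefix_le (f : ℕ → ℝ) (p q r : ℕ) (hpq : p ≤ q) (hqr : q ≤ r)
    (hmono : ∀ i j, p ≤ i → i ≤ j → j < r → f i ≤ f j) :
    ((r - p : ℕ) : ℝ) * ∑ i ∈ Finset.Ico p q, f i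
      ≤ ((q - p : ℕ) : ℝ) * ∑ i ∈ Finset.Ico p r, f i := by
  rcases eq_or_lt_of_le hqr with rfl | hlt
  · rfl
  have h1 : ∑ i ∈ Finset.Ico p q, f i ≤ ((q - p : ℕ) : ℝ) * f q := by
    have := Finset.sum_le_card_nsmul (Finset.Ico p q) f (f q) (by
      intro i hi
      rw [Finset.mem_Ico] at hi
      exact hmono i q hi.1 (le_of_lt hi.2) hlt)
    rwa [Nat.card_Ico, nsmul_eq_mul] at this
  have h2 : ((r - q : ℕ) : ℝ) * f q ≤ ∑ i ∈ Finset.Ico q r, f i := by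
    have := Finset.card_nsmul_le_sum (Finset.Ico q r) f (f q) (by
      intro i hi
      rw [Finset.mem_Ico] at hi
      exact hmono q i hpq hi.1 hi.2)
    rwa [Nat.card_Ico, nsmul_eq_mul] at this
  have hsum : ∑ i ∈ Finset.Ico p r, f i
      = ∑ i ∈ Finset.Ico p q, f i + ∑ i ∈ Finset.Ico q r, f i :=
    (Finset.sum_Ico_consecutive f hpq hqr).symm
  have hcast : ((r - p : ℕ) : ℝ) = ((q - p : ℕ) : ℝ) + ((r - q : ℕ) : ℝ) := by
    rw [Nat.cast_sub hpq, Nat.cast_sub (hpq.trans hqr), Nat.cast_sub hqr]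
    ring
  have hQP : (0:ℝ) ≤ ((q - p : ℕ) : ℝ) := Nat.cast_nonneg _
  have hRQ : (0:ℝ) ≤ ((r - q : ℕ) : ℝ) := Nat.cast_nonneg _
  have key : ((r - q : ℕ) : ℝ) * ∑ i ∈ Finset.Ico p q, f i
      ≤ ((q - p : ℕ) : ℝ) * ∑ i ∈ Finset.Ico q r, f i :=
    calc ((r - q : ℕ) : ℝ) * ∑ i ∈ Finset.Ico p q, f i
        ≤ ((r - q : ℕ) : ℝ) * (((q - p : ℕ) : ℝ) * f q) := by
          exact mul_le_mul_of_nonneg_left h1 hRQ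
      _ = ((q - p : ℕ) : ℝ) * (((r - q : ℕ) : ℝ) * f q) := by ring
      _ ≤ ((q - p : ℕ) : ℝ) * ∑ i ∈ Finset.Ico q r, f i :=
          mul_le_mul_of_nonneg_left h2 hQP
  rw [hsum, hcast]
  ring_nf
  nlinarith [key]

lemma avg_suffix_ge (f : ℕ → ℝ) (p q r : ℕ) (hpq : p ≤ q) (hqr : q ≤ r)
    (hmono : ∀ i j, p ≤ i → i ≤ j → j < r → f i ≤ f j) :
    ((r - q : ℕ) : ℝ) * ∑ i ∈ Finset.Ico p r, f i
      ≤ ((r - p : ℕ) : ℝ) * ∑ i ∈ Finset.Ico q r, f i := by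
  rcases eq_or_lt_of_le hpq with rfl | hlt
  · rfl
  have hq1r : q - 1 < r := by omega
  have h1 : ∑ i ∈ Finset.Ico p q, f i ≤ ((q - p : ℕ) : ℝ) * f (q-1) := by
    have := Finset.sum_le_card_nsmul (Finset.Ico p q) f (f (q-1)) (by
      intro i hi
      rw [Finset.mem_Ico] at hi
      exact hmono i (q-1) hi.1 (by omega) hq1r)
    rwa [Nat.card_Ico, nsmul_eq_mul] at this
  have h2 : ((r - q : ℕ) : ℝ) * f (q-1) ≤ ∑ i ∈ Finset.Ico q r, f i := by
    have := Finset.card_nsmul_le_sum (Finset.Ico q r) f (f (q-1)) (by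
      intro i hi
      rw [Finset.mem_Ico] at hi
      exact hmono (q-1) i (by omega) (by omega) hi.2)
    rwa [Nat.card_Ico, nsmul_eq_mul] at this
  have hsum : ∑ i ∈ Finset.Ico p r, f i
      = ∑ i ∈ Finset.Ico p q, f i + ∑ i ∈ Finset.Ico q r, f i :=
    (Finset.sum_Ico_consecutive f hpq hqr).symm
  have hcast : ((r - p : ℕ) : ℝ) = ((q - p : ℕ) : ℝ) + ((r - q : ℕ) : ℝ) := by
    rw [Nat.cast_sub hpq, Nat.cast_sub (hpq.trans hqr), Nat.cast_sub hqr]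
    ring
  have hQP : (0:ℝ) ≤ ((q - p : ℕ) : ℝ) := Nat.cast_nonneg _
  have hRQ : (0:ℝ) ≤ ((r - q : ℕ) : ℝ) := Nat.cast_nonneg _
  have key : ((r - q : ℕ) : ℝ) * ∑ i ∈ Finset.Ico p q, f i
      ≤ ((q - p : ℕ) : ℝ) * ∑ i ∈ Finset.Ico q r, f i :=
    calc ((r - q : ℕ) : ℝ) * ∑ i ∈ Finset.Ico p q, f i
        ≤ ((r - q : ℕ) : ℝ) * (((q - p : ℕ) : ℝ) * f (q-1)) :=
          mul_le_mul_of_nonneg_left h1 hRQ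
      _ = ((q - p : ℕ) : ℝ) * (((r - q : ℕ) : ℝ) * f (q-1)) := by ring
      _ ≤ ((q - p : ℕ) : ℝ) * ∑ i ∈ Finset.Ico q r, f i :=
          mul_le_mul_of_nonneg_left h2 hQP
  rw [hsum, hcast]
  nlinarith [key]

lemma sq_add_le (ε x y : ℝ) (hε : 0 < ε) :
    (x + y)^2 ≤ (1+ε)*x^2 + (1+ε⁻¹)*y^2 := by
  have h1 : 0 ≤ (ε*x - y)^2 / ε := div_nonneg (sq_nonneg _) hε.le
  have h2 : (1+ε)*x^2 + (1+ε⁻¹)*y^2 - (x + y)^2 = (ε*x - y)^2 / ε := by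
    field_simp
    ring
  linarith

/-- The deterministic pointwise bound. -/
lemma pointwise_bound (n m b : ℕ) (hmb : m < b) (hbn : 2*b + 2 ≤ n)
    (xs : Fin (n - m) → ℝ) (ys : Fin m → ℝ) (ω : ℝ) (th : ℕ → ℝ)
    (hsorted : ∀ i j, 1 ≤ i → i ≤ j → j ≤ n → th i ≤ th j)
    (hperm : Multiset.map th (Finset.Icc 1 n).val
        = Multiset.map xs Finset.univ.val + Multiset.map ys Finset.univ.val) :
    ((1 / ((n - 2*b : ℕ) : ℝ)) * ∑ i ∈ Finset.Icc (b+1) (n-b), th i - ω)^2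
      ≤ ((1 + Real.sqrt b) * ((∑ j, xs j) - ((n - m : ℕ):ℝ) * ω)^2
          + (1 + (Real.sqrt b)⁻¹) * ((b:ℝ) * ∑ j, (xs j - ω)^2))
        / ((n - b - m : ℕ):ℝ)^2 := by
  have hbm : m + b < n := by omega
  set B := Multiset.map xs Finset.univ.val with hB
  set l := B.sort (· ≤ ·) with hl
  have hsort : l.Pairwise (· ≤ ·) := Multiset.pairwise_sort _ _
  have hlen : l.length = n - m := by
    rw [hl, Multiset.length_sort]
    simp [hB]
  set g : ℕ → ℝ := fun i => l.getD i 0 with hg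
  -- order statistic comparisons
  have hub : ∀ i, b + 1 ≤ i → i ≤ n - b → th i ≤ g (i - 1) := by
    intro i hi1 hi2
    set t := th i with htdef
    have hcount1 : (n - i + 1) ≤ Multiset.countP (fun x => t ≤ x)
        (Multiset.map th (Finset.Icc 1 n).val) := by
      rw [Multiset.countP_map]
      have hsub : Finset.Icc i n ⊆ (Finset.Icc 1 n).filter (fun j => t ≤ th j) := by
        intro j hj
        rw [Finset.mem_Icc] at hj
        rw [Finset.mem_filter, Finset.mem_Icc]
        exact ⟨⟨by omega, hj.2⟩, hsorted i j (by omega) hj.1 hj.2⟩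
      have hc := Finset.card_le_card hsub
      rw [Nat.card_Icc] at hc
      have hrw : ((Finset.Icc 1 n).filter (fun j => t ≤ th j)).card
          = Multiset.card (Multiset.filter (fun j => t ≤ th j) (Finset.Icc 1 n).val) := by
        rw [Finset.card, Finset.filter_val]
      omega
    have hcount2 : Multiset.countP (fun x => t ≤ x) (Multiset.map ys Finset.univ.val) ≤ m := by
      calc Multiset.countP (fun x => t ≤ x) (Multiset.map ys Finset.univ.val)
          ≤ Multiset.card (Multiset.map ys Finset.univ.val) := Multiset.countP_le_card _ _
        _ = m := by simp
    have hcountB : (n - i + 1 - m) ≤ Multiset.countP (fun x => t ≤ x) B := by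
      rw [hperm, Multiset.countP_add] at hcount1
      omega
    have hBl : Multiset.countP (fun x => t ≤ x) B = l.countP (fun x => decide (t ≤ x)) := by
      conv_lhs => rw [← Multiset.sort_eq B (· ≤ ·)]
      exact Multiset.coe_countP (p := fun x => t ≤ x) l
    have hres := sorted_le_getD hsort (t := t) (k := n - i + 1 - m)
      (by omega) (by rw [← hBl]; exact hcountB)
    rw [hlen] at hres
    have : n - m - (n - i + 1 - m) = i - 1 := by omega
    rw [this] at hres
    exact hres
  have hlb : ∀ i, b + 1 ≤ i → i ≤ n - b → g (i - m - 1) ≤ th i := by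
    intro i hi1 hi2
    set t := th i with htdef
    have hcount1 : i ≤ Multiset.countP (fun x => x ≤ t)
        (Multiset.map th (Finset.Icc 1 n).val) := by
      rw [Multiset.countP_map]
      have hsub : Finset.Icc 1 i ⊆ (Finset.Icc 1 n).filter (fun j => th j ≤ t) := by
        intro j hj
        rw [Finset.mem_Icc] at hj
        rw [Finset.mem_filter, Finset.mem_Icc]
        exact ⟨⟨hj.1, by omega⟩, hsorted j i hj.1 hj.2 (by omega)⟩
      have hc := Finset.card_le_card hsub
      rw [Nat.card_Icc] at hc
      have hrw : ((Finset.Icc 1 n).filter (fun j => th j ≤ t)).card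
          = Multiset.card (Multiset.filter (fun j => th j ≤ t) (Finset.Icc 1 n).val) := by
        rw [Finset.card, Finset.filter_val]
      omega
    have hcount2 : Multiset.countP (fun x => x ≤ t) (Multiset.map ys Finset.univ.val) ≤ m := by
      calc Multiset.countP (fun x => x ≤ t) (Multiset.map ys Finset.univ.val)
          ≤ Multiset.card (Multiset.map ys Finset.univ.val) := Multiset.countP_le_card _ _
        _ = m := by simp
    have hcountB : (i - m) ≤ Multiset.countP (fun x => x ≤ t) B := by
      rw [hperm, Multiset.countP_add] at hcount1
      omega
    have hBl : Multiset.countP (fun x => x ≤ t) B = l.countP (fun x => decide (x ≤ t)) := by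
      conv_lhs => rw [← Multiset.sort_eq B (· ≤ ·)]
      exact Multiset.coe_countP (p := fun x => x ≤ t) l
    have hres := sorted_getD_le hsort (t := t) (k := i - m)
      (by omega) (by rw [← hBl]; exact hcountB)
    show l.getD (i - m - 1) 0 ≤ t
    exact hres
  -- abbreviations
  set Sx : ℝ := ∑ j, xs j with hSx
  set Q : ℝ := ∑ j, (xs j - ω)^2 with hQ
  set Z : ℝ := ∑ i ∈ Finset.range b, g i with hZ
  set W : ℝ := ∑ i ∈ Finset.Ico (n-m-b) (n-m), g i with hW
  set K : ℝ := ((n - 2*b : ℕ) : ℝ) with hK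
  set D : ℝ := ((n - b - m : ℕ) : ℝ) with hD
  have hKpos : (0:ℝ) < K := by rw [hK]; exact_mod_cast Nat.pos_of_ne_zero (by omega)
  have hDpos : (0:ℝ) < D := by rw [hD]; exact_mod_cast Nat.pos_of_ne_zero (by omega)
  have hDcast : D = ((n - m : ℕ):ℝ) - (b:ℝ) := by
    rw [hD]
    have : (n - b - m : ℕ) = (n - m) - b := by omega
    rw [this, Nat.cast_sub (by omega : b ≤ n - m)]
  -- sums of g over full range
  have hfull : ∀ h : ℝ → ℝ, ∑ i ∈ Finset.range (n - m), h (g i) = ∑ j, h (xs j) := by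
    intro h
    have h1 := sum_range_getD_map l h
    rw [hlen] at h1
    have h2 : (l.map h).sum = (Multiset.map h B).sum := by
      conv_rhs => rw [← Multiset.sort_eq B (· ≤ ·)]
      rfl
    have h3 : (Multiset.map h B).sum = ∑ j, h (xs j) := by
      rw [hB, Multiset.map_map]
      rfl
    rw [h1, h2, h3]
  have hfull_id : ∑ i ∈ Finset.range (n - m), g i = Sx := by
    simpa using hfull (fun x => x)
  have hfull_sq : ∑ i ∈ Finset.range (n - m), (g i - ω)^2 = Q := hfull (fun x => (x - ω)^2)
  -- the four sum comparisons
  have hmonoG : ∀ i j, i ≤ j → j < n - m → g i ≤ g j := by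
    intro i j hij hj
    exact getD_mono hsort hij (by rw [hlen]; omega)
  have hsumA : ∑ i ∈ Finset.Icc (b+1) (n-b), th i ≤ ∑ i ∈ Finset.Ico b (n-b), g i := by
    have e1 : Finset.Icc (b+1) (n-b) = Finset.Ico (b+1) (n-b+1) := (Finset.Ico_add_one_right_eq_Icc _ _).symm
    calc ∑ i ∈ Finset.Icc (b+1) (n-b), th i
        ≤ ∑ i ∈ Finset.Icc (b+1) (n-b), g (i-1) := by
          apply Finset.sum_le_sum
          intro i hi
          rw [Finset.mem_Icc] at hi
          exact hub i hi.1 hi.2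
      _ = ∑ i ∈ Finset.Ico b (n-b), g i := by
          rw [e1, Finset.sum_Ico_eq_sum_range, Finset.sum_Ico_eq_sum_range]
          have hc : n - b + 1 - (b+1) = n - b - b := by omega
          rw [hc]
          apply Finset.sum_congr rfl
          intro i _
          congr 1
          omega
  have hsumA' : ∑ i ∈ Finset.Ico (b-m) (n-m-b), g i ≤ ∑ i ∈ Finset.Icc (b+1) (n-b), th i := by
    have e1 : Finset.Icc (b+1) (n-b) = Finset.Ico (b+1) (n-b+1) := (Finset.Ico_add_one_right_eq_Icc _ _).symm
    calc ∑ i ∈ Finset.Ico (b-m) (n-m-b), g i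
        = ∑ i ∈ Finset.Icc (b+1) (n-b), g (i-m-1) := by
          rw [e1, Finset.sum_Ico_eq_sum_range, Finset.sum_Ico_eq_sum_range]
          have hc : n - m - b - (b - m) = n - b + 1 - (b+1) := by omega
          rw [hc]
          apply Finset.sum_congr rfl
          intro i _
          congr 1
          omega
      _ ≤ ∑ i ∈ Finset.Icc (b+1) (n-b), th i := by
          apply Finset.sum_le_sum
          intro i hi
          rw [Finset.mem_Icc] at hi
          exact hlb i hi.1 hi.2
  have hB1 : D * ∑ i ∈ Finset.Ico b (n-b), g i ≤ K * ∑ i ∈ Finset.Ico b (n-m), g i := by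
    have := avg_prefix_le g b (n-b) (n-m) (by omega) (by omega)
      (fun i j _ hij hj => hmonoG i j hij hj)
    have e1 : (n - m - b : ℕ) = (n - b - m : ℕ) := by omega
    have e2 : (n - b - b : ℕ) = (n - 2*b : ℕ) := by omega
    rw [e1, e2] at this
    exact this
  have hB2 : K * ∑ i ∈ Finset.range (n-m-b), g i ≤ D * ∑ i ∈ Finset.Ico (b-m) (n-m-b), g i := by
    have h0 := avg_suffix_ge g 0 (b-m) (n-m-b) (by omega) (by omega)
      (fun i j _ hij hj => hmonoG i j hij (by omega))
    have e1 : (n - m - b - (b - m) : ℕ) = (n - 2*b : ℕ) := by omega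
    have e2 : (n - m - b - 0 : ℕ) = (n - b - m : ℕ) := by omega
    rw [e1, e2, ← Finset.range_eq_Ico] at h0
    exact h0
  have hC1 : ∑ i ∈ Finset.Ico b (n-m), g i = Sx - Z := by
    have h0 := Finset.sum_Ico_consecutive g (by omega : 0 ≤ b) (by omega : b ≤ n - m)
    rw [← Finset.range_eq_Ico, ← Finset.range_eq_Ico, hfull_id] at h0
    rw [← h0, hZ]
    ring
  have hC2 : ∑ i ∈ Finset.range (n-m-b), g i = Sx - W := by
    have h0 := Finset.sum_Ico_consecutive g (by omega : 0 ≤ n - m - b) (by omega : n - m - b ≤ n - m)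
    rw [← Finset.range_eq_Ico, ← Finset.range_eq_Ico, hfull_id] at h0
    rw [← h0, hW]
    ring
  set T : ℝ := (1 / K) * ∑ i ∈ Finset.Icc (b+1) (n-b), th i - ω with hT
  set St : ℝ := Sx - ((n - m : ℕ):ℝ) * ω with hSt
  set Zt : ℝ := Z - (b:ℝ) * ω with hZt
  set Wt : ℝ := W - (b:ℝ) * ω with hWt
  have h_up : D * ∑ i ∈ Finset.Icc (b+1) (n-b), th i ≤ K * (Sx - Z) := by
    calc D * ∑ i ∈ Finset.Icc (b+1) (n-b), th i
        ≤ D * ∑ i ∈ Finset.Ico b (n-b), g i :=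
          mul_le_mul_of_nonneg_left hsumA hDpos.le
      _ ≤ K * ∑ i ∈ Finset.Ico b (n-m), g i := hB1
      _ = K * (Sx - Z) := by rw [hC1]
  have h_low : K * (Sx - W) ≤ D * ∑ i ∈ Finset.Icc (b+1) (n-b), th i := by
    calc K * (Sx - W) = K * ∑ i ∈ Finset.range (n-m-b), g i := by rw [hC2]
      _ ≤ D * ∑ i ∈ Finset.Ico (b-m) (n-m-b), g i := hB2
      _ ≤ D * ∑ i ∈ Finset.Icc (b+1) (n-b), th i :=
          mul_le_mul_of_nonneg_left hsumA' hDpos.le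
  have h_T_ub : T ≤ (St - Zt) / D := by
    have e2 : St - Zt = (Sx - Z) - D * ω := by rw [hSt, hZt, hDcast]; ring
    have e3 : (St - Zt) / D = (Sx - Z) / D - ω := by
      rw [e2, sub_div, mul_comm, mul_div_assoc, div_self hDpos.ne', mul_one]
    rw [e3, hT]
    have h4 : (∑ i ∈ Finset.Icc (b+1) (n-b), th i) / K ≤ (Sx - Z) / D := by
      rw [div_le_div_iff₀ hKpos hDpos]
      calc (∑ i ∈ Finset.Icc (b+1) (n-b), th i) * D
          = D * ∑ i ∈ Finset.Icc (b+1) (n-b), th i := mul_comm _ _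
        _ ≤ K * (Sx - Z) := h_up
        _ = (Sx - Z) * K := mul_comm _ _
    have h5 : (1 / K) * ∑ i ∈ Finset.Icc (b+1) (n-b), th i
        = (∑ i ∈ Finset.Icc (b+1) (n-b), th i) / K := by ring
    rw [h5]
    linarith
  have h_T_lb : (St - Wt) / D ≤ T := by
    have e2 : St - Wt = (Sx - W) - D * ω := by rw [hSt, hWt, hDcast]; ring
    have e3 : (St - Wt) / D = (Sx - W) / D - ω := by
      rw [e2, sub_div, mul_comm, mul_div_assoc, div_self hDpos.ne', mul_one]
    rw [e3, hT]
    have h4 : (Sx - W) / D ≤ (∑ i ∈ Finset.Icc (b+1) (n-b), th i) / K := by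
      rw [div_le_div_iff₀ hDpos hKpos]
      calc (Sx - W) * K = K * (Sx - W) := mul_comm _ _
        _ ≤ D * ∑ i ∈ Finset.Icc (b+1) (n-b), th i := h_low
        _ = (∑ i ∈ Finset.Icc (b+1) (n-b), th i) * D := mul_comm _ _
    have h5 : (1 / K) * ∑ i ∈ Finset.Icc (b+1) (n-b), th i
        = (∑ i ∈ Finset.Icc (b+1) (n-b), th i) / K := by ring
    rw [h5]
    linarith
  -- Cauchy-Schwarz bounds on Zt, Wt
  have hQnonneg : ∀ i ∈ Finset.range (n-m), (0:ℝ) ≤ (g i - ω)^2 := fun i _ => sq_nonneg _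
  have hZt2 : Zt^2 ≤ (b:ℝ) * Q := by
    have e1 : Zt = ∑ i ∈ Finset.range b, (g i - ω) := by
      rw [Finset.sum_sub_distrib, Finset.sum_const, Finset.card_range, hZt, hZ]
      push_cast
      ring
    have e2 := Finset.sum_mul_sq_le_sq_mul_sq (Finset.range b) (fun _ => (1:ℝ))
      (fun i => g i - ω)
    simp only [one_mul, one_pow] at e2
    rw [Finset.sum_const, Finset.card_range, nsmul_eq_mul, mul_one] at e2
    have e3 : ∑ i ∈ Finset.range b, (g i - ω)^2 ≤ Q := by
      rw [← hfull_sq]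
      apply Finset.sum_le_sum_of_subset_of_nonneg _ (fun i _ _ => sq_nonneg _)
      exact Finset.range_subset_range.2 (by omega)
    calc Zt^2 = (∑ i ∈ Finset.range b, (g i - ω))^2 := by rw [e1]
      _ ≤ (b:ℝ) * ∑ i ∈ Finset.range b, (g i - ω)^2 := e2
      _ ≤ (b:ℝ) * Q := mul_le_mul_of_nonneg_left e3 (Nat.cast_nonneg _)
  have hWt2 : Wt^2 ≤ (b:ℝ) * Q := by
    have hcard : (n - m) - (n - m - b) = b := by omega
    have e1 : Wt = ∑ i ∈ Finset.Ico (n-m-b) (n-m), (g i - ω) := by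
      rw [Finset.sum_sub_distrib, Finset.sum_const, Nat.card_Ico, hcard, hWt, hW]
      push_cast
      ring
    have e2 := Finset.sum_mul_sq_le_sq_mul_sq (Finset.Ico (n-m-b) (n-m)) (fun _ => (1:ℝ))
      (fun i => g i - ω)
    simp only [one_mul, one_pow] at e2
    rw [Finset.sum_const, Nat.card_Ico, hcard, nsmul_eq_mul, mul_one] at e2
    have e3 : ∑ i ∈ Finset.Ico (n-m-b) (n-m), (g i - ω)^2 ≤ Q := by
      rw [← hfull_sq]
      apply Finset.sum_le_sum_of_subset_of_nonneg _ (fun i _ _ => sq_nonneg _)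
      rw [Finset.range_eq_Ico]
      exact Finset.Ico_subset_Ico (by omega) le_rfl
    calc Wt^2 = (∑ i ∈ Finset.Ico (n-m-b) (n-m), (g i - ω))^2 := by rw [e1]
      _ ≤ (b:ℝ) * ∑ i ∈ Finset.Ico (n-m-b) (n-m), (g i - ω)^2 := e2
      _ ≤ (b:ℝ) * Q := mul_le_mul_of_nonneg_left e3 (Nat.cast_nonneg _)
  -- the endpoint bound
  have hsb : (0:ℝ) < Real.sqrt b := Real.sqrt_pos.2 (by exact_mod_cast Nat.pos_of_ne_zero (by omega))
  have hM : ∀ V : ℝ, V^2 ≤ (b:ℝ)*Q →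
      ((St - V)/D)^2 ≤ ((1 + Real.sqrt b) * St^2
        + (1 + (Real.sqrt b)⁻¹) * ((b:ℝ) * Q)) / D^2 := by
    intro V hV
    rw [div_pow, div_le_div_iff₀ (by positivity) (by positivity)]
    have h := sq_add_le (Real.sqrt b) St (-V) hsb
    have h2 : (St - V)^2 ≤ (1 + Real.sqrt b) * St^2 + (1 + (Real.sqrt b)⁻¹) * V^2 := by
      calc (St - V)^2 = (St + (-V))^2 := by ring
        _ ≤ (1 + Real.sqrt b) * St^2 + (1 + (Real.sqrt b)⁻¹) * (-V)^2 := h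
        _ = (1 + Real.sqrt b) * St^2 + (1 + (Real.sqrt b)⁻¹) * V^2 := by ring
    have h3 : (1 + (Real.sqrt b)⁻¹) * V^2 ≤ (1 + (Real.sqrt b)⁻¹) * ((b:ℝ)*Q) :=
      mul_le_mul_of_nonneg_left hV (by positivity)
    exact mul_le_mul_of_nonneg_right (h2.trans (by linarith)) (sq_nonneg D)
  have hZfin := hM Zt hZt2
  have hWfin := hM Wt hWt2
  have habs : |T| ≤ max |(St - Wt)/D| |(St - Zt)/D| := abs_le_max_abs_abs h_T_lb h_T_ub
  rcases le_total (|(St - Wt)/D|) (|(St - Zt)/D|) with hcase | hcase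
  · calc T^2 = |T|^2 := (sq_abs T).symm
      _ ≤ (|(St - Zt)/D|)^2 := by
          apply pow_le_pow_left₀ (abs_nonneg _)
          exact habs.trans (max_le hcase le_rfl)
      _ = ((St - Zt)/D)^2 := sq_abs _
      _ ≤ _ := hZfin
  · calc T^2 = |T|^2 := (sq_abs T).symm
      _ ≤ (|(St - Wt)/D|)^2 := by
          apply pow_le_pow_left₀ (abs_nonneg _)
          exact habs.trans (max_le le_rfl hcase)
      _ = ((St - Wt)/D)^2 := sq_abs _
      _ ≤ _ := hWfin

end ATM

/-- Theorem 1 (convergence guarantee for Angular Trimmed-mean aggregation): the expected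
squared deviation of the ATM output (the average of the `n - 2b` middle order statistics of
the combined benign/malicious values) from the benign mean `ω` is at most
`2 (n-m)(b+1) σ² / (n-b-m)²`.  Here `θ a` is, for each sample point `a`, the nondecreasing
rearrangement (indexed by `1, …, n`) of the combined multiset of the `n - m` benign values
`X i a` and the `m` malicious values `Y j a`. -/
theorem atm_convergence_guarantee
    {Ω : Type*} [MeasurableSpace Ω] (P : Measure Ω) [IsProbabilityMeasure P]
    (n m b : ℕ) (h2m : 2 * m < n) (hmb : m < b) (hb : b ≤ n / 2 - 1)
    (X : Fin (n - m) → Ω → ℝ) (Y : Fin m → Ω → ℝ) (ω σ : ℝ)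
    (hindep : iIndepFun X P)
    (hident : ∀ i j, IdentDistrib (X i) (X j) P P)
    (hL2 : ∀ i, MemLp (X i) 2 P)
    (hmean : ∀ i, ∫ a, X i a ∂P = ω)
    (hvar : ∀ i, variance (X i) P = σ ^ 2)
    (hYmeas : ∀ j, Measurable (Y j))
    (θ : Ω → ℕ → ℝ)
    (hsorted : ∀ a, ∀ i j, 1 ≤ i → i ≤ j → j ≤ n → θ a i ≤ θ a j)
    (hperm : ∀ a,
      Multiset.map (θ a) (Finset.Icc 1 n).val
        = Multiset.map (fun i => X i a) Finset.univ.val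
          + Multiset.map (fun j => Y j a) Finset.univ.val) :
    ∫ a, ((1 / ((n - 2 * b : ℕ) : ℝ)) * ∑ i ∈ Finset.Icc (b + 1) (n - b), θ a i - ω) ^ 2 ∂P
      ≤ 2 * ((n - m : ℕ) : ℝ) * ((b : ℝ) + 1) * σ ^ 2 / ((n - b - m : ℕ) : ℝ) ^ 2 := by
  have hb2 : 2*b + 2 ≤ n := by omega
  have hNpos : 0 < n - m := by omega
  have hσ2 : (0:ℝ) ≤ σ^2 := by
    rw [← hvar ⟨0, hNpos⟩]
    exact variance_nonneg _ _
  have hsb : (0:ℝ) < Real.sqrt b :=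
    Real.sqrt_pos.2 (by exact_mod_cast (by omega : 0 < b))
  have hsq : Real.sqrt b ^ 2 = (b:ℝ) := Real.sq_sqrt (Nat.cast_nonneg b)
  have hDpos : (0:ℝ) < ((n - b - m : ℕ):ℝ) := by exact_mod_cast (by omega : 0 < n - b - m)
  set D2 : ℝ := ((n - b - m : ℕ):ℝ)^2 with hD2
  have hD2pos : (0:ℝ) < D2 := by positivity
  set c1 : ℝ := (1 + Real.sqrt b) / D2 with hc1
  set c2 : ℝ := (1 + (Real.sqrt b)⁻¹) * (b:ℝ) / D2 with hc2
  set St : Ω → ℝ := fun a => (∑ j, X j a) - ((n - m : ℕ):ℝ) * ω with hSt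
  set Q : Ω → ℝ := fun a => ∑ j, (X j a - ω)^2 with hQdef
  -- pointwise bound
  have hpt : ∀ a, ((1 / ((n - 2 * b : ℕ):ℝ)) * ∑ i ∈ Finset.Icc (b+1) (n-b), θ a i - ω)^2
      ≤ c1 * (St a)^2 + c2 * Q a := by
    intro a
    have h := ATM.pointwise_bound n m b hmb hb2 (fun j => X j a) (fun j => Y j a) ω (θ a)
      (hsorted a) (hperm a)
    calc ((1 / ((n - 2 * b : ℕ):ℝ)) * ∑ i ∈ Finset.Icc (b+1) (n-b), θ a i - ω)^2
        ≤ ((1 + Real.sqrt b) * ((∑ j, X j a) - ((n - m : ℕ):ℝ) * ω)^2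
            + (1 + (Real.sqrt b)⁻¹) * ((b:ℝ) * ∑ j, (X j a - ω)^2)) / D2 := h
      _ = c1 * (St a)^2 + c2 * Q a := by
          rw [hc1, hc2, hSt, hQdef]
          ring
  -- integrability
  have hXsub : ∀ j : Fin (n-m), MemLp (fun a => X j a - ω) 2 P :=
    fun j => (hL2 j).sub (memLp_const ω)
  have hQint : Integrable Q P := by
    rw [hQdef]
    apply integrable_finset_sum
    intro j _
    exact (hXsub j).integrable_sq
  have hfun : (∑ j, X j) = fun a => ∑ j, X j a := by
    funext a
    simp
  have hsumL2 : MemLp (fun a => ∑ j, X j a) 2 P := by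
    rw [← hfun]
    exact memLp_finset_sum' _ (fun j _ => hL2 j)
  have hStL2 : MemLp St 2 P := by
    rw [hSt]
    exact hsumL2.sub (memLp_const _)
  have hStint : Integrable (fun a => St a ^ 2) P := hStL2.integrable_sq
  -- expectations
  have hint : ∀ j : Fin (n-m), Integrable (X j) P := fun j => (hL2 j).integrable one_le_two
  have hEsum : ∫ a, (∑ j, X j a) ∂P = ((n - m : ℕ):ℝ) * ω := by
    rw [integral_finset_sum _ (fun j _ => hint j)]
    simp only [hmean]
    rw [Finset.sum_const, Finset.card_univ, Fintype.card_fin, nsmul_eq_mul]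
  have hvar_each : ∀ j : Fin (n-m), ∫ a, (X j a - ω)^2 ∂P = σ^2 := by
    intro j
    have h1 : variance (X j) P = ∫ a, ((X j - fun _ => ∫ x, X j x ∂P) ^ 2 : Ω → ℝ) a ∂P :=
      variance_eq_integral (hL2 j).aestronglyMeasurable.aemeasurable
    rw [hmean j] at h1
    rw [← hvar j, h1]
    apply integral_congr_ae
    filter_upwards with a
    simp [Pi.sub_apply]
  have hEQ : ∫ a, Q a ∂P = ((n - m : ℕ):ℝ) * σ^2 := by
    rw [hQdef]
    rw [integral_finset_sum _ (fun j _ => (hXsub j).integrable_sq)]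
    simp only [hvar_each]
    rw [Finset.sum_const, Finset.card_univ, Fintype.card_fin, nsmul_eq_mul]
  have hESt : ∫ a, St a ^ 2 ∂P = ((n - m : ℕ):ℝ) * σ^2 := by
    have hpair : Set.Pairwise ↑(Finset.univ : Finset (Fin (n-m)))
        (fun i j => IndepFun (X i) (X j) P) := fun i _ j _ hij => hindep.indepFun hij
    have h2 : variance (∑ j, X j) P = ∑ j, variance (X j) P :=
      IndepFun.variance_sum (fun j _ => hL2 j) hpair
    have h3 : ∑ j : Fin (n-m), variance (X j) P = ((n - m : ℕ):ℝ) * σ^2 := by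
      simp only [hvar]
      rw [Finset.sum_const, Finset.card_univ, Fintype.card_fin, nsmul_eq_mul]
    have h4 : variance (fun a => ∑ j, X j a) P
        = ∫ a, (((fun a => ∑ j, X j a) - fun _ => ∫ x, ∑ j, X j x ∂P) ^ 2 : Ω → ℝ) a ∂P :=
      variance_eq_integral hsumL2.aestronglyMeasurable.aemeasurable
    rw [hEsum] at h4
    have h5 : ∫ a, St a ^ 2 ∂P = variance (fun a => ∑ j, X j a) P := by
      rw [h4]
      apply integral_congr_ae
      filter_upwards with a
      simp [hSt, Pi.sub_apply]
    rw [h5, ← hfun, h2, h3]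
  -- combine
  have hEnn : (0:ℝ) ≤ ((n - m : ℕ):ℝ) * σ^2 := by positivity
  calc ∫ a, ((1 / ((n - 2 * b : ℕ):ℝ)) * ∑ i ∈ Finset.Icc (b+1) (n-b), θ a i - ω)^2 ∂P
      ≤ ∫ a, (c1 * St a ^ 2 + c2 * Q a) ∂P :=
        integral_mono_of_nonneg (Filter.Eventually.of_forall fun a => sq_nonneg _)
          ((hStint.const_mul c1).add (hQint.const_mul c2))
          (Filter.Eventually.of_forall hpt)
    _ = c1 * (((n - m : ℕ):ℝ) * σ^2) + c2 * (((n - m : ℕ):ℝ) * σ^2) := by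
        rw [integral_add (hStint.const_mul c1) (hQint.const_mul c2),
          integral_const_mul, integral_const_mul, hESt, hEQ]
    _ ≤ 2 * ((n - m : ℕ):ℝ) * ((b:ℝ) + 1) * σ^2 / ((n - b - m : ℕ):ℝ)^2 := by
        have e0 : (Real.sqrt b)⁻¹ * (b:ℝ) = Real.sqrt b := by
          rw [inv_mul_eq_div, eq_comm, eq_div_iff hsb.ne']
          exact Real.mul_self_sqrt (Nat.cast_nonneg b)
        have e1 : (1 + (Real.sqrt b)⁻¹) * (b:ℝ) = (b:ℝ) + Real.sqrt b := by
          rw [add_mul, one_mul, e0]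
        have e2 : 2 * Real.sqrt b ≤ (b:ℝ) + 1 := by
          nlinarith [sq_nonneg (Real.sqrt b - 1), hsq]
        have key : c1 + c2 ≤ 2 * ((b:ℝ) + 1) / D2 := by
          rw [hc1, hc2, e1, ← add_div]
          rw [div_le_div_iff₀ hD2pos hD2pos]
          have : 1 + Real.sqrt b + ((b:ℝ) + Real.sqrt b) ≤ 2 * ((b:ℝ) + 1) := by linarith
          nlinarith [hD2pos]
        have efin : 2 * ((n - m : ℕ):ℝ) * ((b:ℝ) + 1) * σ^2 / ((n - b - m : ℕ):ℝ)^2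
            = (2 * ((b:ℝ) + 1) / D2) * (((n - m : ℕ):ℝ) * σ^2) := by
          rw [hD2]
          ring
        rw [efin]
        calc c1 * (((n - m : ℕ):ℝ) * σ^2) + c2 * (((n - m : ℕ):ℝ) * σ^2)
            = (c1 + c2) * (((n - m : ℕ):ℝ) * σ^2) := by ring
          _ ≤ (2 * ((b:ℝ) + 1) / D2) * (((n - m : ℕ):ℝ) * σ^2) :=
              mul_le_mul_of_nonneg_right key hEnn
end
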